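/- For real κ with 0<κ<1, ∫₀^∞ exp_κ(-t) dt = 1/(1-κ²). -/

import Mathlib

/-!
With `b(x) = √(1 + κ²x²) + κx` we have `exp_κ = b ^ (1/κ)`, `b' = κ b / √(1 + κ²x²)` and
`b(x) b(-x) = 1`. Hence `exp_κ' = exp_κ / √(1 + κ²x²)`, and `(√(1 + κ²x²) - κ²x) exp_κ` is a
primitive of `(1 - κ²) exp_κ`. For `x ≤ 0` and `κ ≤ 1` this primitive is at most
`b(x)⁻¹ exp_κ(x) = b(x) ^ (1/κ - 1)`, which tends to `0` at `-∞` because `b(x) = b(-x)⁻¹ → 0`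
there and `κ < 1`. The integral is therefore the value of the primitive at `0` divided by
`1 - κ²`.
-/

noncomputable def kexp (κ x : ℝ) : ℝ :=
  (Real.sqrt (1 + κ^2 * x^2) + κ*x) ^ (1/κ : ℝ)

open Real Filter Topology MeasureTheory Set

noncomputable def kexpBase (κ x : ℝ) : ℝ := √(1 + κ ^ 2 * x ^ 2) + κ * x

theorem kexp_eq_kexpBase_rpow (κ x : ℝ) : kexp κ x = kexpBase κ x ^ (1 / κ) := rfl

noncomputable def kexpPrimitive (κ x : ℝ) : ℝ := (√(1 + κ ^ 2 * x ^ 2) - κ ^ 2 * x) * kexp κ x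

theorem abs_lt_sqrt_one_add (κ x : ℝ) : |κ * x| < √(1 + κ ^ 2 * x ^ 2) := by
  rw [← sqrt_sq_eq_abs]
  exact sqrt_lt_sqrt (sq_nonneg _) (by nlinarith)

theorem kexpBase_pos (κ x : ℝ) : 0 < kexpBase κ x := by
  have := abs_lt_sqrt_one_add κ x
  have := neg_abs_le (κ * x)
  unfold kexpBase
  linarith

theorem kexpBase_mul_kexpBase_neg (κ x : ℝ) : kexpBase κ x * kexpBase κ (-x) = 1 := by
  unfold kexpBase
  rw [neg_sq]
  linear_combination sq_sqrt (by positivity : (0 : ℝ) ≤ 1 + κ ^ 2 * x ^ 2)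

theorem kexpBase_neg (κ x : ℝ) : kexpBase κ (-x) = (kexpBase κ x)⁻¹ :=
  eq_inv_of_mul_eq_one_right (kexpBase_mul_kexpBase_neg κ x)

theorem kexp_pos (κ x : ℝ) : 0 < kexp κ x :=
  rpow_pos_of_pos (kexpBase_pos κ x) _

theorem hasDerivAt_sqrt_one_add (κ x : ℝ) :
    HasDerivAt (fun y => √(1 + κ ^ 2 * y ^ 2)) (κ ^ 2 * x / √(1 + κ ^ 2 * x ^ 2)) x := by
  have h := (((hasDerivAt_pow 2 x).const_mul (κ ^ 2)).const_add 1).sqrt (by positivity)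
  convert h using 1
  field_simp
  ring

theorem hasDerivAt_kexpBase (κ x : ℝ) :
    HasDerivAt (kexpBase κ) (κ * kexpBase κ x / √(1 + κ ^ 2 * x ^ 2)) x := by
  refine ((hasDerivAt_sqrt_one_add κ x).add ((hasDerivAt_id x).const_mul κ)).congr_deriv ?_
  have : √(1 + κ ^ 2 * x ^ 2) ≠ 0 := (sqrt_pos.2 (by positivity)).ne'
  unfold kexpBase
  field_simp
  ring

theorem hasDerivAt_kexp {κ : ℝ} (hκ : κ ≠ 0) (x : ℝ) :
    HasDerivAt (kexp κ) (kexp κ x / √(1 + κ ^ 2 * x ^ 2)) x := by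
  refine ((hasDerivAt_kexpBase κ x).rpow_const (p := 1 / κ)
    (Or.inl (kexpBase_pos κ x).ne')).congr_deriv ?_
  rw [rpow_sub_one (kexpBase_pos κ x).ne', kexp_eq_kexpBase_rpow]
  have := (kexpBase_pos κ x).ne'
  field_simp

theorem hasDerivAt_kexpPrimitive {κ : ℝ} (hκ : κ ≠ 0) (x : ℝ) :
    HasDerivAt (kexpPrimitive κ) ((1 - κ ^ 2) * kexp κ x) x := by
  refine (((hasDerivAt_sqrt_one_add κ x).sub ((hasDerivAt_id x).const_mul (κ ^ 2))).mul
    (hasDerivAt_kexp hκ x)).congr_deriv ?_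
  have : √(1 + κ ^ 2 * x ^ 2) ≠ 0 := (sqrt_pos.2 (by positivity)).ne'
  simp only [id, Pi.sub_apply]
  field_simp
  ring

theorem tendsto_kexpBase_atBot {κ : ℝ} (hκ : 0 < κ) : Tendsto (kexpBase κ) atBot (𝓝 0) := by
  have hinf : Tendsto (fun x => kexpBase κ (-x)) atBot atTop := by
    refine tendsto_atTop_mono (fun x => ?_)
      (tendsto_neg_atBot_atTop.const_mul_atTop (by positivity : 0 < 2 * κ))
    unfold kexpBase
    have := le_abs_self (κ * -x)
    have := abs_lt_sqrt_one_add κ (-x)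
    linarith
  have := tendsto_inv_atTop_zero.comp hinf
  simpa [Function.comp_def, kexpBase_neg] using this

theorem tendsto_kexpPrimitive_atBot {κ : ℝ} (h0 : 0 < κ) (h1 : κ < 1) :
    Tendsto (kexpPrimitive κ) atBot (𝓝 0) := by
  have hp : 0 < 1 / κ - 1 := by rw [sub_pos, lt_div_iff₀ h0, one_mul]; exact h1
  have hbound : Tendsto (fun x => kexpBase κ x ^ (1 / κ - 1)) atBot (𝓝 0) := by
    have := ((continuousAt_rpow_const 0 _ (Or.inr hp.le)).tendsto).comp (tendsto_kexpBase_atBot h0)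
    rwa [zero_rpow hp.ne'] at this
  refine tendsto_of_tendsto_of_tendsto_of_le_of_le' tendsto_const_nhds hbound ?_ ?_
  · filter_upwards [eventually_le_atBot 0] with x hx
    have := abs_lt_sqrt_one_add κ x
    have := abs_nonneg (κ * x)
    have : 0 ≤ -(κ ^ 2 * x) := by nlinarith
    exact mul_nonneg (by linarith) (kexp_pos κ x).le
  · filter_upwards [eventually_le_atBot 0] with x hx
    have hb := kexpBase_pos κ x
    have hle : √(1 + κ ^ 2 * x ^ 2) - κ ^ 2 * x ≤ (kexpBase κ x)⁻¹ := by
      rw [← kexpBase_neg]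
      unfold kexpBase
      rw [neg_sq]
      nlinarith [mul_nonneg (mul_nonneg h0.le (sub_nonneg.2 h1.le)) (neg_nonneg.2 hx)]
    calc kexpPrimitive κ x
        ≤ (kexpBase κ x)⁻¹ * kexp κ x := mul_le_mul_of_nonneg_right hle (kexp_pos κ x).le
      _ = kexpBase κ x ^ (1 / κ - 1) := by
        rw [rpow_sub_one hb.ne', kexp_eq_kexpBase_rpow, inv_mul_eq_div]

theorem kexp_integral (κ : ℝ) (h0 : 0 < κ) (h1 : κ < 1) :
    ∫ t in Set.Ioi (0:ℝ), kexp κ (-t) = 1/(1 - κ^2) := by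
  have hκ : 0 < 1 - κ ^ 2 := by nlinarith
  set G := fun t => -kexpPrimitive κ (-t) / (1 - κ ^ 2)
  have hderiv (t : ℝ) : HasDerivAt G (kexp κ (-t)) t := by
    refine ((((hasDerivAt_kexpPrimitive h0.ne' (-t)).comp t (hasDerivAt_neg t)).neg).div_const
      (1 - κ ^ 2)).congr_deriv ?_
    field_simp
  have hlim : Tendsto G atTop (𝓝 0) := by
    simpa using ((tendsto_kexpPrimitive_atBot h0 h1).comp tendsto_neg_atTop_atBot).neg.div_const
      (1 - κ ^ 2)
  rw [integral_Ioi_of_hasDerivAt_of_nonneg' (fun t _ => hderiv t) (fun t _ => (kexp_pos κ _).le)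
    hlim]
  simp [G, kexpPrimitive, kexp, neg_div]
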